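/- There exists a constant C > 0, depending only on δ, such that for every continuously differentiable f : ℝ² → ℝ with f(x,y) = −f(−x,y) = −f(x,−y) and ‖f‖_{***} < ∞, the function ∂ₓ⁻¹f(x,y) = −∫ₓ^∞ f(s,y) ds is well defined for all (x,y) ∈ ℝ², and ‖(1+r)^{2−δ} ∂ₓ⁻¹f‖_∞ + ‖(1+r)^{2−δ} ∂ₓ⁻¹(∂_yf)‖_∞ ≤ C ‖f‖_{***}. -/

import Mathlib

noncomputable section
open MeasureTheory Filter Set ENNReal

namespace Stmt19

def pdx (f : ℝ → ℝ → ℝ) : ℝ → ℝ → ℝ := fun x y => deriv (fun t => f t y) x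
def pdy (f : ℝ → ℝ → ℝ) : ℝ → ℝ → ℝ := fun x y => deriv (fun t => f x t) y

/-- ∂ₓ⁻¹f(x,y) = −∫ₓ^∞ f(s,y) ds -/
def pdxInv (f : ℝ → ℝ → ℝ) : ℝ → ℝ → ℝ := fun x y => -∫ s in Ioi x, f s y

/-- weighted sup norm ‖(1+r)^a f‖_∞ as an extended nonnegative real -/
def wsup (a : ℝ) (f : ℝ → ℝ → ℝ) : ℝ≥0∞ :=
  ⨆ p : ℝ × ℝ, ENNReal.ofReal ((1 + Real.sqrt (p.1^2 + p.2^2)) ^ a * |f p.1 p.2|)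

def normC (f : ℝ → ℝ → ℝ) : ℝ≥0∞ :=
  (∫⁻ p : ℝ × ℝ, ENNReal.ofReal ((f p.1 p.2)^2 + (pdy f p.1 p.2)^2)) ^ ((1:ℝ)/2)

/-- the norm ‖·‖_{***} -/
def normSSS (δ : ℝ) (f : ℝ → ℝ → ℝ) : ℝ≥0∞ :=
  normC f + wsup (3 - δ) f + wsup (3 - δ) (pdy f) + wsup (3 - δ) (pdx (pdy f))

/-!
Write `w = 1 + r`. If `|h s| ≤ M w(s,y)^(-α)` with `α > 1`, then for `x ≥ 0` the tail integral
`∫ₓ^∞ h` is at most `2^α M w(x,y)^(1-α) / (α - 1)`: on `s ≥ 0` one has `1 + s + |y| ≤ 2 w(s,y)`,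
the integral of `(s + 1 + |y|)^(-α)` over `(x, ∞)` is explicit, and `w(x,y) ≤ 1 + x + |y|`.
For `x < 0` the integral over `(x, -x)` of an odd function vanishes, so the tail integral from `x`
equals the one from `|x|`. Both `f` and `∂_y f` are odd in `x`; take `α = 3 - δ`.
-/

open Topology

def weight (x y : ℝ) : ℝ := 1 + √(x ^ 2 + y ^ 2)

lemma weight_pos (x y : ℝ) : 0 < weight x y := by
  unfold weight; positivity

lemma weight_abs_left (x y : ℝ) : weight |x| y = weight x y := by
  simp only [weight, sq_abs]

lemma one_add_abs_le_weight (x y : ℝ) : 1 + |x| ≤ weight x y := by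
  unfold weight
  gcongr
  exact Real.abs_le_sqrt (le_add_of_nonneg_right (sq_nonneg y))

lemma weight_le_one_add_abs_add_abs (x y : ℝ) : weight x y ≤ 1 + |x| + |y| := by
  unfold weight
  rw [add_assoc]
  gcongr
  rw [Real.sqrt_le_left (by positivity)]
  nlinarith [sq_abs x, sq_abs y, abs_nonneg x, abs_nonneg y]

lemma one_add_abs_add_abs_le_two_mul_weight (x y : ℝ) : 1 + |x| + |y| ≤ 2 * weight x y := by
  have hx := Real.abs_le_sqrt (le_add_of_nonneg_right (sq_nonneg y) : x ^ 2 ≤ x ^ 2 + y ^ 2)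
  have hy := Real.abs_le_sqrt (le_add_of_nonneg_left (sq_nonneg x) : y ^ 2 ≤ x ^ 2 + y ^ 2)
  unfold weight
  linarith

lemma continuous_weight_left (y : ℝ) : Continuous fun x => weight x y := by
  unfold weight; fun_prop

lemma integral_add_rpow_Ioi_of_lt {a c m : ℝ} (ha : a < -1) (hc : -m < c) :
    ∫ x in Ioi c, (x + m) ^ a = -(c + m) ^ (a + 1) / (a + 1) := by
  have hd : ∀ x ∈ Ici c, HasDerivAt (fun t ↦ (t + m) ^ (a + 1) / (a + 1)) ((x + m) ^ a) x := by
    intro x hx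
    refine ((((hasDerivAt_id x).add_const m).rpow_const (p := a + 1)
      (Or.inl (by linarith [mem_Ici.mp hx] : x + m ≠ 0))).div_const (a + 1)).congr_deriv ?_
    rw [id, one_mul, add_sub_cancel_right, mul_div_cancel_left₀ _ (by linarith : a + 1 ≠ 0)]
  have ht : Tendsto (fun t ↦ (t + m) ^ (a + 1) / (a + 1)) atTop (𝓝 0) := by
    rw [← zero_div (a + 1), ← neg_neg (a + 1)]
    exact ((tendsto_rpow_neg_atTop (by linarith)).comp
      (tendsto_atTop_add_const_right _ m tendsto_id)).div_const _
  rw [integral_Ioi_of_hasDerivAt_of_tendsto' hd (integrableOn_add_rpow_Ioi_of_lt ha hc) ht,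
    zero_sub, neg_div]

lemma integral_Ioi_abs_of_odd {E : Type*} [NormedAddCommGroup E] [NormedSpace ℝ E]
    {h : ℝ → E} (hodd : Function.Odd h) {x : ℝ} (hint : IntegrableOn h (Ioi x)) :
    ∫ s in Ioi |x|, h s = ∫ s in Ioi x, h s := by
  rcases le_or_gt 0 x with hx | hx
  · rw [abs_of_nonneg hx]
  have hx' : x ≤ -x := by linarith
  have hcancel : ∫ s in x..-x, h s = 0 := by
    have hneg := intervalIntegral.integral_comp_neg (a := x) (b := -x) h
    simp only [hodd.eq, intervalIntegral.integral_neg, neg_neg] at hneg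
    have htwice : (2 : ℝ) • ∫ s in x..-x, h s = 0 := by
      rw [two_smul]; nth_rewrite 1 [← hneg]; exact neg_add_cancel _
    exact (smul_eq_zero.mp htwice).resolve_left two_ne_zero
  rw [abs_of_neg hx, ← Ioc_union_Ioi_eq_Ioi hx', setIntegral_union (Ioc_disjoint_Ioi le_rfl)
    measurableSet_Ioi (hint.mono_set Ioc_subset_Ioi_self) (hint.mono_set (Ioi_subset_Ioi hx')),
    ← intervalIntegral.integral_of_le hx', hcancel, zero_add]

section weightIntegral

variable {α : ℝ}

lemma integrable_weight_rpow_neg (hα : 1 < α) (y : ℝ) :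
    Integrable fun s => weight s y ^ (-α) := by
  have hdom : Integrable fun s : ℝ => (1 + ‖s‖) ^ (-α) :=
    integrable_one_add_norm (by simpa using hα)
  refine hdom.mono' ((continuous_weight_left y).rpow_const
    fun s => Or.inl (weight_pos s y).ne').aestronglyMeasurable (ae_of_all _ fun s => ?_)
  rw [Real.norm_of_nonneg (Real.rpow_nonneg (weight_pos s y).le _), Real.norm_eq_abs]
  exact Real.rpow_le_rpow_of_nonpos (by positivity) (one_add_abs_le_weight s y) (by linarith)

lemma weight_rpow_neg_le (hα : 0 ≤ α) {s : ℝ} (hs : 0 ≤ s) (y : ℝ) :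
    weight s y ^ (-α) ≤ 2 ^ α * (s + (1 + |y|)) ^ (-α) := by
  have hle : s + (1 + |y|) ≤ 2 * weight s y := by
    linarith [one_add_abs_add_abs_le_two_mul_weight s y, abs_of_nonneg hs]
  calc weight s y ^ (-α) = 2 ^ α * (2 * weight s y) ^ (-α) := by
        rw [Real.mul_rpow zero_le_two (weight_pos s y).le, Real.rpow_neg zero_le_two, ← mul_assoc,
          mul_inv_cancel₀ (Real.rpow_pos_of_pos two_pos α).ne', one_mul]
    _ ≤ 2 ^ α * (s + (1 + |y|)) ^ (-α) :=
        mul_le_mul_of_nonneg_left (Real.rpow_le_rpow_of_nonpos (by positivity) hle (by linarith))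
          (by positivity)

lemma setIntegral_Ioi_weight_rpow_neg_le (hα : 1 < α) {x : ℝ} (hx : 0 ≤ x) (y : ℝ) :
    ∫ s in Ioi x, weight s y ^ (-α) ≤ 2 ^ α / (α - 1) * weight x y ^ (1 - α) := by
  have hc : -(1 + |y|) < x := by linarith [abs_nonneg y]
  calc ∫ s in Ioi x, weight s y ^ (-α)
      ≤ ∫ s in Ioi x, 2 ^ α * (s + (1 + |y|)) ^ (-α) :=
        setIntegral_mono_on (integrable_weight_rpow_neg hα y).integrableOn
          ((integrableOn_add_rpow_Ioi_of_lt (by linarith) hc).const_mul _) measurableSet_Ioi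
          fun s hs => weight_rpow_neg_le (by linarith) (hx.trans (le_of_lt hs)) y
    _ = 2 ^ α / (α - 1) * (x + (1 + |y|)) ^ (1 - α) := by
        rw [integral_const_mul, integral_add_rpow_Ioi_of_lt (by linarith) hc,
          show -α + 1 = -(α - 1) by ring, neg_div_neg_eq, show 1 - α = -(α - 1) by ring]
        ring
    _ ≤ 2 ^ α / (α - 1) * weight x y ^ (1 - α) := by
        refine mul_le_mul_of_nonneg_left (Real.rpow_le_rpow_of_nonpos (weight_pos x y) ?_
          (by linarith)) (div_nonneg (by positivity) (by linarith))
        linarith [weight_le_one_add_abs_add_abs x y, abs_of_nonneg hx]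

end weightIntegral

section decay

variable {h : ℝ → ℝ} {α M y : ℝ}

lemma integrable_of_abs_le_weight_rpow (hα : 1 < α) (hmeas : AEStronglyMeasurable h)
    (hbound : ∀ s, |h s| ≤ M * weight s y ^ (-α)) : Integrable h :=
  ((integrable_weight_rpow_neg hα y).const_mul M).mono' hmeas (ae_of_all _ hbound)

lemma abs_integral_Ioi_le_of_abs_le_weight_rpow (hα : 1 < α)
    (hbound : ∀ s, |h s| ≤ M * weight s y ^ (-α)) {x : ℝ} (hx : 0 ≤ x) :
    |∫ s in Ioi x, h s| ≤ 2 ^ α / (α - 1) * M * weight x y ^ (1 - α) := by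
  have hM : 0 ≤ M := nonneg_of_mul_nonneg_left ((abs_nonneg _).trans (hbound 0))
    (Real.rpow_pos_of_pos (weight_pos 0 y) _)
  calc |∫ s in Ioi x, h s|
      ≤ ∫ s in Ioi x, M * weight s y ^ (-α) :=
        norm_integral_le_of_norm_le (f := h)
          ((integrable_weight_rpow_neg hα y).const_mul M).integrableOn (ae_of_all _ hbound)
    _ = M * ∫ s in Ioi x, weight s y ^ (-α) := integral_const_mul M _
    _ ≤ M * (2 ^ α / (α - 1) * weight x y ^ (1 - α)) :=
        mul_le_mul_of_nonneg_left (setIntegral_Ioi_weight_rpow_neg_le hα hx y) hM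
    _ = 2 ^ α / (α - 1) * M * weight x y ^ (1 - α) := by ring

lemma weight_rpow_mul_abs_integral_Ioi_le (hα : 1 < α) (hmeas : AEStronglyMeasurable h)
    (hodd : Function.Odd h) (hbound : ∀ s, |h s| ≤ M * weight s y ^ (-α)) (x : ℝ) :
    weight x y ^ (α - 1) * |∫ s in Ioi x, h s| ≤ 2 ^ α / (α - 1) * M := by
  rw [← integral_Ioi_abs_of_odd hodd
    (integrable_of_abs_le_weight_rpow hα hmeas hbound).integrableOn, ← weight_abs_left x y]
  calc weight |x| y ^ (α - 1) * |∫ s in Ioi |x|, h s|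
      ≤ weight |x| y ^ (α - 1) * (2 ^ α / (α - 1) * M * weight |x| y ^ (1 - α)) :=
        mul_le_mul_of_nonneg_left
          (abs_integral_Ioi_le_of_abs_le_weight_rpow hα hbound (abs_nonneg x))
          (Real.rpow_nonneg (weight_pos _ y).le _)
    _ = 2 ^ α / (α - 1) * M := by
        rw [mul_left_comm, ← Real.rpow_add (weight_pos _ y), sub_add_sub_cancel', sub_self,
          Real.rpow_zero, mul_one]

end decay

section weightedSup

variable {a α : ℝ} {g : ℝ → ℝ → ℝ}

lemma abs_le_toReal_wsup_mul_weight_rpow (hg : wsup a g ≠ ⊤) (x y : ℝ) :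
    |g x y| ≤ (wsup a g).toReal * weight x y ^ (-a) := by
  have hle : weight x y ^ a * |g x y| ≤ (wsup a g).toReal := by
    rw [← ENNReal.ofReal_le_iff_le_toReal hg]
    exact le_iSup (fun p : ℝ × ℝ => ENNReal.ofReal (weight p.1 p.2 ^ a * |g p.1 p.2|)) (x, y)
  rwa [Real.rpow_neg (weight_pos x y).le, ← div_eq_mul_inv,
    le_div_iff₀ (Real.rpow_pos_of_pos (weight_pos x y) a), mul_comm]

lemma integrable_of_wsup_ne_top (hα : 1 < α) (hcont : ∀ y, Continuous (g · y))
    (hg : wsup α g ≠ ⊤) (y : ℝ) : Integrable (g · y) :=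
  integrable_of_abs_le_weight_rpow hα (hcont y).aestronglyMeasurable
    fun s => abs_le_toReal_wsup_mul_weight_rpow hg s y

lemma wsup_pdxInv_le (hα : 1 < α) (hodd : ∀ y, Function.Odd (g · y))
    (hcont : ∀ y, Continuous (g · y)) :
    wsup (α - 1) (pdxInv g) ≤ ENNReal.ofReal (2 ^ α / (α - 1)) * wsup α g := by
  have hC : 0 < 2 ^ α / (α - 1) := div_pos (by positivity) (by linarith)
  by_cases hg : wsup α g = ⊤
  · rw [hg, ENNReal.mul_top (ENNReal.ofReal_pos.2 hC).ne']
    exact le_top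
  rw [← ENNReal.ofReal_toReal hg, ← ENNReal.ofReal_mul hC.le]
  refine iSup_le fun p => ENNReal.ofReal_le_ofReal ?_
  rw [pdxInv, abs_neg]
  exact weight_rpow_mul_abs_integral_Ioi_le hα (hcont p.2).aestronglyMeasurable (hodd p.2)
    (fun s => abs_le_toReal_wsup_mul_weight_rpow hg s p.2) p.1

lemma wsup_add_wsup_pdy_le_normSSS (δ : ℝ) (f : ℝ → ℝ → ℝ) :
    wsup (3 - δ) f + wsup (3 - δ) (pdy f) ≤ normSSS δ f :=
  (add_le_add_left le_add_self _).trans le_self_add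

end weightedSup

lemma pdy_eq_fderiv {f : ℝ → ℝ → ℝ} (hf : Differentiable ℝ (Function.uncurry f)) :
    pdy f = fun x y => fderiv ℝ (Function.uncurry f) (x, y) (0, 1) := by
  ext x y
  exact ((hf (x, y)).hasFDerivAt.comp_hasDerivAt y
    ((hasDerivAt_const y x).prodMk (hasDerivAt_id y))).deriv

lemma continuous_uncurry_pdy {f : ℝ → ℝ → ℝ} (hf : ContDiff ℝ 1 (Function.uncurry f)) :
    Continuous (Function.uncurry (pdy f)) := by
  rw [pdy_eq_fderiv (hf.differentiable one_ne_zero)]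
  exact (hf.continuous_fderiv one_ne_zero).clm_apply continuous_const

lemma odd_pdy {f : ℝ → ℝ → ℝ} (hodd : ∀ y, Function.Odd (f · y)) (y : ℝ) :
    Function.Odd (pdy f · y) := fun x => by
  have hneg : (fun t => f (-x) t) = fun t => -f x t := funext fun t => hodd t x
  simp only [pdy, hneg]
  exact deriv.neg

theorem pdxInv_estimate (δ : ℝ) (hδ : δ ∈ Ioo (0:ℝ) (1/2)) :
    ∃ C > (0:ℝ), ∀ f : ℝ → ℝ → ℝ,
      ContDiff ℝ 1 (Function.uncurry f) →
      (∀ x y : ℝ, f x y = -f (-x) y ∧ f x y = -f x (-y)) →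
      normSSS δ f < ⊤ →
      (∀ x y : ℝ, IntegrableOn (fun s => f s y) (Ioi x)) ∧
      (∀ x y : ℝ, IntegrableOn (fun s => pdy f s y) (Ioi x)) ∧
      wsup (2 - δ) (pdxInv f) + wsup (2 - δ) (pdxInv (pdy f)) ≤
        ENNReal.ofReal C * normSSS δ f := by
  have hα : 1 < 3 - δ := by linarith [hδ.2]
  set C : ℝ := 2 ^ (3 - δ) / (3 - δ - 1)
  refine ⟨C, div_pos (by positivity) (by linarith), fun f hf hsym hfin => ?_⟩
  have hodd : ∀ y, Function.Odd (f · y) := fun y x => by linarith [(hsym x y).1]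
  have hcont : ∀ y, Continuous (f · y) := fun y => hf.continuous.uncurry_right y
  have hcont' : ∀ y, Continuous (pdy f · y) := fun y =>
    (continuous_uncurry_pdy hf).uncurry_right y
  have hsum := wsup_add_wsup_pdy_le_normSSS δ f
  have hsum_ne_top := (hsum.trans_lt hfin).ne
  refine ⟨fun x y => (integrable_of_wsup_ne_top hα hcont
      (ne_top_of_le_ne_top hsum_ne_top le_self_add) y).integrableOn,
    fun x y => (integrable_of_wsup_ne_top hα hcont'
      (ne_top_of_le_ne_top hsum_ne_top le_add_self) y).integrableOn, ?_⟩
  rw [show 2 - δ = 3 - δ - 1 by ring]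
  calc wsup (3 - δ - 1) (pdxInv f) + wsup (3 - δ - 1) (pdxInv (pdy f))
      ≤ ENNReal.ofReal C * wsup (3 - δ) f + ENNReal.ofReal C * wsup (3 - δ) (pdy f) :=
        add_le_add (wsup_pdxInv_le hα hodd hcont) (wsup_pdxInv_le hα (odd_pdy hodd) hcont')
    _ = ENNReal.ofReal C * (wsup (3 - δ) f + wsup (3 - δ) (pdy f)) := (mul_add _ _ _).symm
    _ ≤ ENNReal.ofReal C * normSSS δ f := by gcongr

end Stmt19
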